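/- arXiv:2312.11801 — 3 statements merged into one kernel-verified Lean document; each statement's English description precedes it below -/
import Mathlib

section
/- Fix ρ > 0, y_t ∈ ℝᵐ, and X ∈ Sⁿ. Let ν = proj_N(b − 𝒜X − ρ·y_t) and ỹ = y_t − (1/ρ)(b − ν − 𝒜X). Then: (i) ỹ ∈ Y, and in fact ỹᵢ = max{(y_t)ᵢ − (1/ρ)(b − 𝒜X)ᵢ, 0} for every i ∈ I; (ii) ⟨ỹ, ν⟩ = 0; and (iii) ỹ = proj_Y(y_t − (1/ρ)(b − 𝒜X)). -/
open Matrix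
open scoped RealInnerProductSpace

noncomputable def Aop {n m : ℕ} (A : Fin m → Matrix (Fin n) (Fin n) ℝ)
    (X : Matrix (Fin n) (Fin n) ℝ) : EuclideanSpace ℝ (Fin m) :=
  WithLp.toLp 2 (fun i => (A i * X).trace)

def Yset {m : ℕ} (I : Finset (Fin m)) : Set (EuclideanSpace ℝ (Fin m)) :=
  {y | ∀ i ∈ I, 0 ≤ y i}

/-- Euclidean projection onto `N`: `proj_N(z)ᵢ = max{zᵢ, 0}` for `i ∈ I`, `0` for `i ∉ I`. -/
noncomputable def projN {m : ℕ} (I : Finset (Fin m)) (z : EuclideanSpace ℝ (Fin m)) :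
    EuclideanSpace ℝ (Fin m) :=
  WithLp.toLp 2 (fun i => if i ∈ I then max (z i) 0 else 0)

/-- Euclidean projection onto `Y`: `proj_Y(z)ᵢ = max{zᵢ, 0}` for `i ∈ I`, `zᵢ` for `i ∉ I`. -/
noncomputable def projY {m : ℕ} (I : Finset (Fin m)) (z : EuclideanSpace ℝ (Fin m)) :
    EuclideanSpace ℝ (Fin m) :=
  WithLp.toLp 2 (fun i => if i ∈ I then max (z i) 0 else z i)

/-! Put `z = y_t − (1/ρ)(b − 𝒜X)`. Then `ν = ρ · proj_N(−z)`, so `ỹ = z + proj_N(−z)`, which is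
`proj_Y z` by the Moreau decomposition for the mutually polar cones `Y` and `−N`; the two parts of
that decomposition are orthogonal, whence `⟨ỹ, ν⟩ = 0`. -/

section

variable {m : ℕ} (I : Finset (Fin m))

theorem projY_mem_Yset (z : EuclideanSpace ℝ (Fin m)) : projY I z ∈ Yset I := by
  intro i hi
  simp [projY, hi]

theorem projY_apply_of_mem {z : EuclideanSpace ℝ (Fin m)} {i : Fin m} (hi : i ∈ I) :
    projY I z i = max (z i) 0 := by
  simp [projY, hi]

theorem projN_smul_of_nonneg {r : ℝ} (hr : 0 ≤ r) (z : EuclideanSpace ℝ (Fin m)) :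
    projN I (r • z) = r • projN I z := by
  ext i
  by_cases hi : i ∈ I
  · simp [projN, hi, mul_max_of_nonneg _ _ hr]
  · simp [projN, hi]

theorem projY_eq_add_projN_neg (z : EuclideanSpace ℝ (Fin m)) :
    projY I z = z + projN I (-z) := by
  ext i
  by_cases hi : i ∈ I
  · simp only [projY, projN, hi, if_true, PiLp.add_apply, PiLp.neg_apply]
    linarith [max_zero_sub_max_neg_zero_eq_self (z i)]
  · simp [projY, projN, hi]

theorem inner_projY_projN_neg (z : EuclideanSpace ℝ (Fin m)) :
    ⟪projY I z, projN I (-z)⟫ = 0 := by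
  rw [PiLp.inner_apply]
  refine Finset.sum_eq_zero fun i _ => ?_
  by_cases hi : i ∈ I
  · rcases le_total (z i) 0 with hz | hz <;> simp [projY, projN, hi, hz]
  · simp [projY, projN, hi]

end

/-- With `ν = proj_N(b − 𝒜X − ρ·y_t)` and `ỹ = y_t − (1/ρ)(b − ν − 𝒜X)`:
(i) `ỹ ∈ Y` and `ỹᵢ = max{(y_t)ᵢ − (1/ρ)(b − 𝒜X)ᵢ, 0}` for every `i ∈ I`;
(ii) `⟨ỹ, ν⟩ = 0`; (iii) `ỹ = proj_Y(y_t − (1/ρ)(b − 𝒜X))`. -/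
theorem stmt4 {n m : ℕ} (A : Fin m → Matrix (Fin n) (Fin n) ℝ)
    (b : EuclideanSpace ℝ (Fin m)) (I : Finset (Fin m))
    (ρ : ℝ) (hρ : 0 < ρ) (yt : EuclideanSpace ℝ (Fin m))
    (X : Matrix (Fin n) (Fin n) ℝ)
    (ν ytilde : EuclideanSpace ℝ (Fin m))
    (hν : ν = projN I (b - Aop A X - ρ • yt))
    (hyt : ytilde = yt - (1 / ρ) • (b - ν - Aop A X)) :
    ytilde ∈ Yset I ∧
    (∀ i ∈ I, ytilde i = max (yt i - (1 / ρ) * (b i - Aop A X i)) 0) ∧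
    ⟪ytilde, ν⟫ = 0 ∧
    ytilde = projY I (yt - (1 / ρ) • (b - Aop A X)) := by
  set z := yt - (1 / ρ) • (b - Aop A X)
  have hν_z : ν = ρ • projN I (-z) := by
    rw [hν, ← projN_smul_of_nonneg I hρ.le]
    congr 1
    simp only [z, smul_sub, smul_smul, mul_one_div_cancel hρ.ne', one_smul, neg_sub]
  have hyt_z : ytilde = projY I z := by
    rw [hyt, projY_eq_add_projN_neg, hν_z, sub_right_comm, smul_sub, smul_smul,
      one_div_mul_cancel hρ.ne', one_smul, sub_sub_eq_add_sub, add_sub_right_comm]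
  subst hyt_z
  refine ⟨projY_mem_Yset I z, fun i hi => projY_apply_of_mem I hi, ?_, rfl⟩
  rw [hν_z, inner_smul_right, inner_projY_projN_neg, mul_zero]
end

section
/- Let ỹ ∈ Y. Set v to be a unit-norm maximum eigenvector of C − 𝒜*ỹ if λmax(C − 𝒜*ỹ) > 0 and v = 0 otherwise, and let g = b − α·𝒜(vvᵀ). Let X̄ ∈ Sⁿ with X̄ ⪰ 0 and let V ∈ ℝ^{n×k} have orthonormal columns such that v lies in the column span of V. Define X̂ = {η·X̄ + V S Vᵀ : η ≥ 0, S ⪰ 0, η·tr(X̄) + tr(S) ≤ α} and f̂(y) = sup over (X,ν) ∈ X̂ × N of ⟨C − 𝒜*y, X⟩ + ⟨b − ν, y⟩. Then f̂(y) ≥ f(ỹ) + ⟨g, y − ỹ⟩ for all y ∈ ℝᵐ. -/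
open Matrix
open scoped RealInnerProductSpace

noncomputable def lambdaMax {n : ℕ} (M : Matrix (Fin n) (Fin n) ℝ) : ℝ :=
  if hM : M.IsHermitian then ⨆ i, hM.eigenvalues i else 0

noncomputable def Aadj {n m : ℕ} (A : Fin m → Matrix (Fin n) (Fin n) ℝ)
    (y : EuclideanSpace ℝ (Fin m)) : Matrix (Fin n) (Fin n) ℝ :=
  ∑ i, y i • A i

def Nset {m : ℕ} (I : Finset (Fin m)) : Set (EuclideanSpace ℝ (Fin m)) :=
  {ν | (∀ i ∈ I, 0 ≤ ν i) ∧ ∀ i ∉ I, ν i = 0}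

open Classical in
noncomputable def fpen {n m : ℕ} (C : Matrix (Fin n) (Fin n) ℝ)
    (A : Fin m → Matrix (Fin n) (Fin n) ℝ) (b : EuclideanSpace ℝ (Fin m))
    (I : Finset (Fin m)) (α : ℝ) (y : EuclideanSpace ℝ (Fin m)) : EReal :=
  if y ∈ Yset I then
    ((α * max (lambdaMax (C - Aadj A y)) 0 + ⟪b, y⟫ : ℝ) : EReal)
  else ⊤

def SpecSet {n k : ℕ} (α : ℝ) (Xb : Matrix (Fin n) (Fin n) ℝ)
    (V : Matrix (Fin n) (Fin k) ℝ) : Set (Matrix (Fin n) (Fin n) ℝ) :=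
  {X | ∃ η : ℝ, ∃ S : Matrix (Fin k) (Fin k) ℝ,
      0 ≤ η ∧ S.PosSemidef ∧ η * Xb.trace + S.trace ≤ α ∧ X = η • Xb + V * S * Vᵀ}

noncomputable def modelF {n m k : ℕ} (C : Matrix (Fin n) (Fin n) ℝ)
    (A : Fin m → Matrix (Fin n) (Fin n) ℝ) (b : EuclideanSpace ℝ (Fin m))
    (I : Finset (Fin m)) (α : ℝ) (Xb : Matrix (Fin n) (Fin n) ℝ)
    (V : Matrix (Fin n) (Fin k) ℝ) (y : EuclideanSpace ℝ (Fin m)) : EReal :=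
  sSup {r : EReal | ∃ X ∈ SpecSet α Xb V, ∃ ν ∈ Nset I,
    r = ((((C - Aadj A y) * X).trace + ⟪b - ν, y⟫ : ℝ) : EReal)}

/-!
The pair `X = α vvᵀ`, `ν = 0` is feasible for the model (take `η = 0` and `S = α wwᵀ` with
`Vw = v`, of trace `α‖v‖² ≤ α`). At this pair the objective `y ↦ ⟨C − 𝒜*y, X⟩ + ⟨b, y⟩` is
affine with gradient `b − 𝒜X = g`, and at `ỹ` it equals
`α vᵀ(C − 𝒜*ỹ)v + ⟨b, ỹ⟩ = α [λmax(C − 𝒜*ỹ)]₊ + ⟨b, ỹ⟩ = f(ỹ)`. So it is the linearization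
of `f` at `ỹ`, and the supremum `f̂(y)` dominates it.
-/

namespace Matrix

variable {R : Type*} [CommSemiring R] {l n : Type*} [Fintype n]

theorem trace_mul_vecMulVec_self (M : Matrix n n R) (v : n → R) :
    (M * vecMulVec v v).trace = v ⬝ᵥ M *ᵥ v := by
  rw [mul_vecMulVec, trace_vecMulVec, dotProduct_comm]

theorem mul_vecMulVec_self_mul_transpose (V : Matrix l n R) (w : n → R) :
    V * vecMulVec w w * Vᵀ = vecMulVec (V *ᵥ w) (V *ᵥ w) := by
  rw [mul_vecMulVec, vecMulVec_mul, vecMul_transpose]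

theorem dotProduct_mulVec_self_of_transpose_mul_self_eq_one [Fintype l] [DecidableEq n]
    {V : Matrix l n R} (hV : Vᵀ * V = 1) (w : n → R) : (V *ᵥ w) ⬝ᵥ (V *ᵥ w) = w ⬝ᵥ w := by
  rw [dotProduct_mulVec, ← mulVec_transpose, mulVec_mulVec, hV, one_mulVec]

end Matrix

section Operators

variable {n m : ℕ} (A : Fin m → Matrix (Fin n) (Fin n) ℝ)

theorem inner_Aop (X : Matrix (Fin n) (Fin n) ℝ) (y : EuclideanSpace ℝ (Fin m)) :
    ⟪Aop A X, y⟫ = (Aadj A y * X).trace := by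
  simp only [Aop, Aadj, PiLp.inner_apply, RCLike.inner_apply, conj_trivial, Finset.sum_mul,
    trace_sum, smul_mul, trace_smul, smul_eq_mul, mul_comm]

theorem Aop_smul (c : ℝ) (X : Matrix (Fin n) (Fin n) ℝ) : Aop A (c • X) = c • Aop A X := by
  ext i
  simp [Aop, trace_smul]

theorem Aadj_sub (y z : EuclideanSpace ℝ (Fin m)) : Aadj A (y - z) = Aadj A y - Aadj A z := by
  simp only [Aadj, PiLp.sub_apply, sub_smul, Finset.sum_sub_distrib]

theorem trace_mul_add_inner_eq (C X : Matrix (Fin n) (Fin n) ℝ)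
    (b y z : EuclideanSpace ℝ (Fin m)) :
    ((C - Aadj A y) * X).trace + ⟪b, y⟫
      = ((C - Aadj A z) * X).trace + ⟪b, z⟫ + ⟪b - Aop A X, y - z⟫ := by
  have hAadj : (Aadj A y * X).trace = (Aadj A z * X).trace + ⟪Aop A X, y - z⟫ := by
    rw [inner_Aop, Aadj_sub, sub_mul, trace_sub]
    ring
  rw [inner_sub_left, inner_sub_right b, sub_mul, sub_mul, trace_sub, trace_sub, hAadj]
  ring

end Operators

section Eigenvector

variable {n : ℕ} {M : Matrix (Fin n) (Fin n) ℝ} {lam : ℝ} {v : Fin n → ℝ}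

theorem dotProduct_self_le_one_of_top_eigenvector
    (hv : (0 < lam → v ⬝ᵥ v = 1 ∧ M *ᵥ v = lam • v) ∧ (lam ≤ 0 → v = 0)) :
    v ⬝ᵥ v ≤ 1 := by
  rcases lt_or_ge 0 lam with hpos | hnonpos
  · exact (hv.1 hpos).1.le
  · simp [hv.2 hnonpos]

theorem max_zero_eq_dotProduct_mulVec_of_top_eigenvector
    (hv : (0 < lam → v ⬝ᵥ v = 1 ∧ M *ᵥ v = lam • v) ∧ (lam ≤ 0 → v = 0)) :
    max lam 0 = v ⬝ᵥ M *ᵥ v := by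
  rcases lt_or_ge 0 lam with hpos | hnonpos
  · obtain ⟨hunit, heig⟩ := hv.1 hpos
    rw [heig, dotProduct_smul, smul_eq_mul, hunit, mul_one, max_eq_left hpos.le]
  · simp [hv.2 hnonpos, max_eq_right hnonpos]

end Eigenvector

section Model

variable {n m k : ℕ}

theorem smul_vecMulVec_self_mem_SpecSet {α : ℝ} (hα : 0 ≤ α) (Xb : Matrix (Fin n) (Fin n) ℝ)
    {V : Matrix (Fin n) (Fin k) ℝ} (hV : Vᵀ * V = 1) {w : Fin k → ℝ}
    (hw : (V *ᵥ w) ⬝ᵥ (V *ᵥ w) ≤ 1) :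
    α • vecMulVec (V *ᵥ w) (V *ᵥ w) ∈ SpecSet α Xb V := by
  refine ⟨0, α • vecMulVec w w, le_rfl, ?_, ?_, ?_⟩
  · simpa using (posSemidef_vecMulVec_self_star w).smul hα
  · rw [zero_mul, zero_add, trace_smul, trace_vecMulVec, smul_eq_mul,
      ← dotProduct_mulVec_self_of_transpose_mul_self_eq_one hV]
    exact mul_le_of_le_one_right hα hw
  · rw [zero_smul, zero_add, Matrix.mul_smul, smul_mul, mul_vecMulVec_self_mul_transpose]

theorem le_modelF {C : Matrix (Fin n) (Fin n) ℝ} {A : Fin m → Matrix (Fin n) (Fin n) ℝ}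
    {b : EuclideanSpace ℝ (Fin m)} {I : Finset (Fin m)} {α : ℝ}
    {Xb : Matrix (Fin n) (Fin n) ℝ} {V : Matrix (Fin n) (Fin k) ℝ}
    {X : Matrix (Fin n) (Fin n) ℝ} (hX : X ∈ SpecSet α Xb V)
    {ν : EuclideanSpace ℝ (Fin m)} (hν : ν ∈ Nset I) (y : EuclideanSpace ℝ (Fin m)) :
    ((((C - Aadj A y) * X).trace + ⟪b - ν, y⟫ : ℝ) : EReal) ≤ modelF C A b I α Xb V y :=
  le_sSup ⟨X, hX, ν, hν, rfl⟩

theorem zero_mem_Nset (I : Finset (Fin m)) : (0 : EuclideanSpace ℝ (Fin m)) ∈ Nset I :=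
  ⟨fun _ _ => le_rfl, fun _ _ => rfl⟩

end Model

theorem stmt9_general {n m k : ℕ}
    (C : Matrix (Fin n) (Fin n) ℝ) (A : Fin m → Matrix (Fin n) (Fin n) ℝ)
    (b : EuclideanSpace ℝ (Fin m)) (I : Finset (Fin m)) (α : ℝ) (hα : 0 < α)
    (ytilde : EuclideanSpace ℝ (Fin m)) (hytilde : ytilde ∈ Yset I)
    (v : Fin n → ℝ)
    (hv : (0 < lambdaMax (C - Aadj A ytilde) →
            v ⬝ᵥ v = 1 ∧
            (C - Aadj A ytilde).mulVec v = lambdaMax (C - Aadj A ytilde) • v) ∧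
          (lambdaMax (C - Aadj A ytilde) ≤ 0 → v = 0))
    (g : EuclideanSpace ℝ (Fin m)) (hg : g = b - α • Aop A (vecMulVec v v))
    (Xb : Matrix (Fin n) (Fin n) ℝ)
    (V : Matrix (Fin n) (Fin k) ℝ) (hV : Vᵀ * V = 1)
    (hspan : ∃ w : Fin k → ℝ, V.mulVec w = v) :
    ∀ y : EuclideanSpace ℝ (Fin m),
      fpen C A b I α ytilde + ((⟪g, y - ytilde⟫ : ℝ) : EReal)
        ≤ modelF C A b I α Xb V y := by
  intro y
  obtain ⟨w, rfl⟩ := hspan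
  set X := α • vecMulVec (V *ᵥ w) (V *ᵥ w)
  have hX : X ∈ SpecSet α Xb V :=
    smul_vecMulVec_self_mem_SpecSet hα.le Xb hV (dotProduct_self_le_one_of_top_eigenvector hv)
  calc fpen C A b I α ytilde + ((⟪g, y - ytilde⟫ : ℝ) : EReal)
      = ((((C - Aadj A y) * X).trace + ⟪b - 0, y⟫ : ℝ) : EReal) := by
        rw [fpen, if_pos hytilde, ← EReal.coe_add, EReal.coe_eq_coe_iff, sub_zero,
          trace_mul_add_inner_eq A C X b y ytilde, hg, Aop_smul, Matrix.mul_smul, trace_smul,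
          smul_eq_mul, trace_mul_vecMulVec_self,
          max_zero_eq_dotProduct_mulVec_of_top_eigenvector hv]
    _ ≤ modelF C A b I α Xb V y := le_modelF hX (zero_mem_Nset I) y

/-- subgradient lower bound for the spectral bundle model.  With `ỹ ∈ Y`, `v` a
unit-norm maximum eigenvector of `C − 𝒜*ỹ` (or `v = 0` if `λmax ≤ 0`),
`g = b − α·𝒜(vvᵀ)`, `X̄ ⪰ 0`, and `V` with orthonormal columns whose span contains `v`,
the model satisfies `f̂(y) ≥ f(ỹ) + ⟨g, y − ỹ⟩` for all `y`. -/
theorem stmt9 {n m k : ℕ} (hn : 0 < n) (hm : 0 < m) (hk : 0 < k)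
    (C : Matrix (Fin n) (Fin n) ℝ) (A : Fin m → Matrix (Fin n) (Fin n) ℝ)
    (b : EuclideanSpace ℝ (Fin m)) (I : Finset (Fin m)) (α : ℝ) (hα : 0 < α)
    (ytilde : EuclideanSpace ℝ (Fin m)) (hytilde : ytilde ∈ Yset I)
    (v : Fin n → ℝ)
    (hv : (0 < lambdaMax (C - Aadj A ytilde) →
            v ⬝ᵥ v = 1 ∧
            (C - Aadj A ytilde).mulVec v = lambdaMax (C - Aadj A ytilde) • v) ∧
          (lambdaMax (C - Aadj A ytilde) ≤ 0 → v = 0))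
    (g : EuclideanSpace ℝ (Fin m)) (hg : g = b - α • Aop A (vecMulVec v v))
    (Xb : Matrix (Fin n) (Fin n) ℝ) (hXb : Xb.PosSemidef)
    (V : Matrix (Fin n) (Fin k) ℝ) (hV : Vᵀ * V = 1)
    (hspan : ∃ w : Fin k → ℝ, V.mulVec w = v) :
    ∀ y : EuclideanSpace ℝ (Fin m),
      fpen C A b I α ytilde + ((⟪g, y - ytilde⟫ : ℝ) : EReal)
        ≤ modelF C A b I α Xb V y :=
  stmt9_general C A b I α hα ytilde hytilde v hv g hg Xb V hV hspan
end

section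
/- Fix ρ > 0 and β ∈ (0,1). Let y_t ∈ Y with f(y_t) < +∞, let y⋆ be a minimizer of f over ℝᵐ, and let X ∈ Sⁿ. Let ν = proj_N(b − 𝒜X − ρ·y_t) and ỹ = y_t − (1/ρ)(b − ν − 𝒜X). Suppose f̂ : ℝᵐ → (−∞,+∞] satisfies f̂ ≤ f pointwise, ỹ is a minimizer of y ↦ f̂(y) + (ρ/2)‖y − y_t‖² with f̂(ỹ) finite, and the descent condition β·(f(y_t) − f̂(ỹ)) ≤ f(y_t) − f(ỹ) holds. Then dist(𝒜X, K)² ≤ (2ρ/β)·(f(y_t) − f(y⋆)). -/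
open Matrix
open scoped RealInnerProductSpace

def Kset {m : ℕ} (I : Finset (Fin m)) (b : EuclideanSpace ℝ (Fin m)) :
    Set (EuclideanSpace ℝ (Fin m)) :=
  {z | (∀ i ∈ I, z i ≤ b i) ∧ ∀ i ∉ I, z i = b i}

/-!
The point `b - ν` lies in `K` and differs from `𝒜X` by `ρ (y_t - ỹ)`, so
`dist(𝒜X, K) ≤ ρ ‖ỹ - y_t‖`. Comparing the proximal objective at `ỹ` with its value at `y_t`
gives `(ρ/2) ‖ỹ - y_t‖² ≤ f(y_t) - f̂(ỹ)`, and the descent condition bounds the right-hand side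
by `(f(y_t) - f(y⋆)) / β`.
-/

theorem sub_projN_mem_Kset {m : ℕ} (I : Finset (Fin m)) (b z : EuclideanSpace ℝ (Fin m)) :
    b - projN I z ∈ Kset I b := by
  refine ⟨fun i hi => ?_, fun i hi => ?_⟩ <;> simp [projN, hi]

theorem mul_norm_sub_eq_dist {E : Type*} [SeminormedAddCommGroup E] [NormedSpace ℝ E]
    {ρ : ℝ} (hρ : 0 < ρ) {a c y y' : E} (hy' : y' = y - (1 / ρ) • (c - a)) :
    ρ * ‖y' - y‖ = dist a c := by
  rw [hy', sub_sub_cancel_left, norm_neg, norm_smul, Real.norm_of_nonneg (by positivity),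
    ← mul_assoc, mul_one_div_cancel hρ.ne', one_mul, dist_comm, dist_eq_norm]

theorem sq_mul_norm_sub_le_of_descent {E : Type*} [SeminormedAddCommGroup E]
    (f fhat : E → EReal) {ρ β : ℝ} (hρ : 0 < ρ) (hβ : 0 < β) {yt ytilde ystar : E}
    (hytfin : f yt ≠ ⊤) (hystar : ∀ y, f ystar ≤ f y) (hfhat : ∀ y, fhat y ≤ f y)
    (htildefin : fhat ytilde ≠ ⊤ ∧ fhat ytilde ≠ ⊥)
    (hmin : ∀ y, fhat ytilde + (((ρ / 2) * ‖ytilde - yt‖ ^ 2 : ℝ) : EReal)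
        ≤ fhat y + (((ρ / 2) * ‖y - yt‖ ^ 2 : ℝ) : EReal))
    (hdesc : (β : EReal) * (f yt - fhat ytilde) ≤ f yt - f ytilde) :
    (((ρ * ‖ytilde - yt‖) ^ 2 : ℝ) : EReal) ≤ ((2 * ρ / β : ℝ) : EReal) * (f yt - f ystar) := by
  set fh := (fhat ytilde).toReal
  have hfh : (fh : EReal) = fhat ytilde := EReal.coe_toReal htildefin.1 htildefin.2
  have hprox : ((fh + (ρ / 2) * ‖ytilde - yt‖ ^ 2 : ℝ) : EReal) ≤ f yt := by
    have h := hmin yt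
    rw [sub_self, norm_zero, zero_pow two_ne_zero, mul_zero, EReal.coe_zero, add_zero] at h
    rw [EReal.coe_add, hfh]
    exact h.trans (hfhat yt)
  set ft := (f yt).toReal
  have hft : (ft : EReal) = f yt :=
    EReal.coe_toReal hytfin (ne_bot_of_le_ne_bot (EReal.coe_ne_bot _) hprox)
  rw [← hft, EReal.coe_le_coe_iff] at hprox
  have hdecrease : ((β * (ft - fh) : ℝ) : EReal) ≤ f yt - f ystar := by
    rw [EReal.coe_mul, EReal.coe_sub, hft, hfh]
    exact hdesc.trans (EReal.sub_le_sub le_rfl (hystar ytilde))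
  calc (((ρ * ‖ytilde - yt‖) ^ 2 : ℝ) : EReal)
      ≤ ((2 * ρ / β * (β * (ft - fh)) : ℝ) : EReal) := by
        rw [EReal.coe_le_coe_iff, show 2 * ρ / β * (β * (ft - fh)) = 2 * ρ * (ft - fh) by
          field_simp]
        nlinarith
    _ ≤ ((2 * ρ / β : ℝ) : EReal) * (f yt - f ystar) := by
        rw [EReal.coe_mul]
        exact mul_le_mul_of_nonneg_left hdecrease (EReal.coe_nonneg.2 (by positivity))

theorem stmt13_general {n m : ℕ}
    (C : Matrix (Fin n) (Fin n) ℝ) (A : Fin m → Matrix (Fin n) (Fin n) ℝ)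
    (b : EuclideanSpace ℝ (Fin m)) (I : Finset (Fin m)) (α : ℝ)
    (ρ β : ℝ) (hρ : 0 < ρ) (hβ0 : 0 < β)
    (yt : EuclideanSpace ℝ (Fin m))
    (hytfin : fpen C A b I α yt ≠ ⊤)
    (ystar : EuclideanSpace ℝ (Fin m))
    (hystar : ∀ y, fpen C A b I α ystar ≤ fpen C A b I α y)
    (X : Matrix (Fin n) (Fin n) ℝ)
    (ν ytilde : EuclideanSpace ℝ (Fin m))
    (hν : ν = projN I (b - Aop A X - ρ • yt))
    (hyt' : ytilde = yt - (1 / ρ) • (b - ν - Aop A X))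
    (fhat : EuclideanSpace ℝ (Fin m) → EReal)
    (hfhat : ∀ y, fhat y ≤ fpen C A b I α y)
    (htildefin : fhat ytilde ≠ ⊤ ∧ fhat ytilde ≠ ⊥)
    (hmin : ∀ y, fhat ytilde + (((ρ / 2) * ‖ytilde - yt‖ ^ 2 : ℝ) : EReal)
        ≤ fhat y + (((ρ / 2) * ‖y - yt‖ ^ 2 : ℝ) : EReal))
    (hdesc : (β : EReal) * (fpen C A b I α yt - fhat ytilde)
        ≤ fpen C A b I α yt - fpen C A b I α ytilde) :
    (((Metric.infDist (Aop A X) (Kset I b)) ^ 2 : ℝ) : EReal)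
      ≤ ((2 * ρ / β : ℝ) : EReal) * (fpen C A b I α yt - fpen C A b I α ystar) := by
  have hdist : Metric.infDist (Aop A X) (Kset I b) ≤ ρ * ‖ytilde - yt‖ := by
    rw [mul_norm_sub_eq_dist hρ hyt']
    exact Metric.infDist_le_dist_of_mem (hν ▸ sub_projN_mem_Kset I b _)
  calc (((Metric.infDist (Aop A X) (Kset I b)) ^ 2 : ℝ) : EReal)
      ≤ (((ρ * ‖ytilde - yt‖) ^ 2 : ℝ) : EReal) :=
        EReal.coe_le_coe_iff.2 (pow_le_pow_left₀ Metric.infDist_nonneg hdist 2)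
    _ ≤ _ := sq_mul_norm_sub_le_of_descent _ fhat hρ hβ0 hytfin hystar hfhat htildefin hmin hdesc

/-- at a descent step, `dist(𝒜X, K)² ≤ (2ρ/β)·(f(y_t) − f(y⋆))`. -/
theorem stmt13 {n m : ℕ} (hn : 0 < n) (hm : 0 < m)
    (C : Matrix (Fin n) (Fin n) ℝ) (A : Fin m → Matrix (Fin n) (Fin n) ℝ)
    (b : EuclideanSpace ℝ (Fin m)) (I : Finset (Fin m)) (α : ℝ) (hα : 0 < α)
    (ρ β : ℝ) (hρ : 0 < ρ) (hβ0 : 0 < β) (hβ1 : β < 1)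
    (yt : EuclideanSpace ℝ (Fin m)) (hyt : yt ∈ Yset I)
    (hytfin : fpen C A b I α yt ≠ ⊤)
    (ystar : EuclideanSpace ℝ (Fin m))
    (hystar : ∀ y, fpen C A b I α ystar ≤ fpen C A b I α y)
    (X : Matrix (Fin n) (Fin n) ℝ)
    (ν ytilde : EuclideanSpace ℝ (Fin m))
    (hν : ν = projN I (b - Aop A X - ρ • yt))
    (hyt' : ytilde = yt - (1 / ρ) • (b - ν - Aop A X))
    (fhat : EuclideanSpace ℝ (Fin m) → EReal)
    (hfhat : ∀ y, fhat y ≤ fpen C A b I α y)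
    (htildefin : fhat ytilde ≠ ⊤ ∧ fhat ytilde ≠ ⊥)
    (hmin : ∀ y, fhat ytilde + (((ρ / 2) * ‖ytilde - yt‖ ^ 2 : ℝ) : EReal)
        ≤ fhat y + (((ρ / 2) * ‖y - yt‖ ^ 2 : ℝ) : EReal))
    (hdesc : (β : EReal) * (fpen C A b I α yt - fhat ytilde)
        ≤ fpen C A b I α yt - fpen C A b I α ytilde) :
    (((Metric.infDist (Aop A X) (Kset I b)) ^ 2 : ℝ) : EReal)
      ≤ ((2 * ρ / β : ℝ) : EReal) * (fpen C A b I α yt - fpen C A b I α ystar) :=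
  stmt13_general C A b I α ρ β hρ hβ0 yt hytfin ystar hystar X ν ytilde hν hyt' fhat hfhat htildefin
    hmin hdesc
end
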